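/- arXiv:1503.03968 — 4 statements merged into one kernel-verified Lean document; each statement's English description precedes it below -/
import Mathlib

section
/- Let N = (n_ij) ∈ SL(2,ℤ) and let p, q, r be integers with r ≠ 0. Then the map ℤ⁴ → G⁺_{N,p,q,r} sending (n₀,n₁,n₂,n₃) to g₀^{n₀} g₁^{n₁} g₂^{n₂} g₃^{n₃} is a bijection; i.e., every element of G⁺_{N,p,q,r} can be written uniquely as such a product. -/
/-- The relations of the group `G⁺_{N,p,q,r}` attached to an Inoue surface of type `S⁺`:
generators `g₀,g₁,g₂,g₃` (indexed by `Fin 4`) and relations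
`g₀g₁g₀⁻¹ = g₁^{n₁₁} g₂^{n₁₂} g₃^{p}`, `g₀g₂g₀⁻¹ = g₁^{n₂₁} g₂^{n₂₂} g₃^{q}`,
`g₁g₂g₁⁻¹g₂⁻¹ = g₃^{r}` and `g₃gᵢ = gᵢg₃` for `i = 0,1,2`. -/
def gplusRels (N : Matrix (Fin 2) (Fin 2) ℤ) (p q r : ℤ) : Set (FreeGroup (Fin 4)) :=
  { FreeGroup.of 0 * FreeGroup.of 1 * (FreeGroup.of 0)⁻¹ *
      ((FreeGroup.of 1) ^ N 0 0 * (FreeGroup.of 2) ^ N 0 1 * (FreeGroup.of 3) ^ p)⁻¹,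
    FreeGroup.of 0 * FreeGroup.of 2 * (FreeGroup.of 0)⁻¹ *
      ((FreeGroup.of 1) ^ N 1 0 * (FreeGroup.of 2) ^ N 1 1 * (FreeGroup.of 3) ^ q)⁻¹,
    FreeGroup.of 1 * FreeGroup.of 2 * (FreeGroup.of 1)⁻¹ * (FreeGroup.of 2)⁻¹ *
      ((FreeGroup.of 3) ^ r)⁻¹,
    FreeGroup.of 3 * FreeGroup.of 0 * (FreeGroup.of 3)⁻¹ * (FreeGroup.of 0)⁻¹,
    FreeGroup.of 3 * FreeGroup.of 1 * (FreeGroup.of 3)⁻¹ * (FreeGroup.of 1)⁻¹,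
    FreeGroup.of 3 * FreeGroup.of 2 * (FreeGroup.of 3)⁻¹ * (FreeGroup.of 2)⁻¹ }

/-- The group `G⁺_{N,p,q,r}`. -/
abbrev Gplus (N : Matrix (Fin 2) (Fin 2) ℤ) (p q r : ℤ) := PresentedGroup (gplusRels N p q r)

/-!
Conjugation by `g₀` acts on `⟨g₁, g₂, g₃⟩` as the automorphism `twist` of the integral
Heisenberg group with commutator `g₃^r`; `det N = 1` is what makes `twist` invertible. The
relations of `G⁺` hold in `Heisenberg r ⋊ ℤ`, giving `G⁺ → Heisenberg r ⋊ ℤ`. Conversely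
`⟨x, y, z⟩ ↦ g₁^x g₂^y g₃^z` is a homomorphism, because `g₃` is central and
`g₂^b g₁^a = g₁^a g₂^b g₃^(-rab)`, and it intertwines `twist` with conjugation by `g₀`, so it
extends to the semidirect product. The two maps are mutually inverse, and in the semidirect
product every element is uniquely `(0, n₀) · (⟨n₁, n₂, n₃⟩, 0)`.
-/

section Commutation

variable {G : Type*} [Group G] {a b c : G} {t : ℤ}

lemma zpow_mul_eq_mul_zpow_mul_zpow (hc : c ∈ Subgroup.center G) (h : a * b = b * a * c ^ t)
    (m : ℤ) : a ^ m * b = b * a ^ m * c ^ (t * m) := by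
  have hct : Commute a (c ^ t) := Subgroup.mem_center_iff.mp (Subgroup.zpow_mem _ hc t) a
  have hconj : b⁻¹ * a * b = a * c ^ t := by rw [mul_assoc, h]; group
  have hconj_zpow := conj_zpow (a := b⁻¹) (b := a) (i := m)
  rw [inv_inv, hconj, hct.mul_zpow, ← zpow_mul] at hconj_zpow
  rw [mul_assoc b, hconj_zpow]
  group

lemma zpow_mul_zpow_eq_mul_zpow_mul_zpow (hc : c ∈ Subgroup.center G)
    (h : a * b = b * a * c ^ t) (m n : ℤ) : a ^ m * b ^ n = b ^ n * a ^ m * c ^ (t * m * n) := by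
  have h' : b * a ^ m = a ^ m * b * c ^ (-(t * m)) := by
    rw [zpow_mul_eq_mul_zpow_mul_zpow hc h m]
    group
  rw [zpow_mul_eq_mul_zpow_mul_zpow hc h' n, mul_assoc, ← zpow_add]
  group

end Commutation

lemma MonoidHom.map_zpow_aut_apply {M H : Type*} [Group M] [Group H] (f : M →* H)
    (α : MulAut M) (x : H) (h : ∀ u, f (α u) = x * f u * x⁻¹) (n : ℤ) (u : M) :
    f ((α ^ n) u) = x ^ n * f u * (x ^ n)⁻¹ := by
  induction n using Int.induction_on generalizing u with
  | zero => simp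
  | succ n ih =>
    rw [zpow_add_one, MulAut.mul_apply, ih, h]
    group
  | pred n ih =>
    have h_inv := h (α⁻¹ u)
    rw [MulAut.apply_inv_self] at h_inv
    rw [zpow_sub_one, MulAut.mul_apply, ih, h_inv]
    group

lemma SemidirectProduct.bijective_inr_mul_inl {N G : Type*} [Group N] [Group G]
    {φ : G →* MulAut N} : Function.Bijective fun x : G × N => (inr x.1 * inl x.2 : N ⋊[φ] G) := by
  have h (x : G × N) : (inr x.1 * inl x.2 : N ⋊[φ] G) = ⟨φ x.1 x.2, x.1⟩ := by ext <;> simp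
  refine ⟨fun x y hxy => ?_, fun z => ⟨(z.right, (φ z.right)⁻¹ z.left), by ext <;> simp⟩⟩
  simp only [h] at hxy
  have hright : x.1 = y.1 := congrArg SemidirectProduct.right hxy
  have hleft : φ x.1 x.2 = φ y.1 y.2 := hright ▸ congrArg SemidirectProduct.left hxy
  exact Prod.ext hright ((φ y.1).injective (hright ▸ hleft))

/-- `⟨x, y, z⟩` stands for `g₁^x g₂^y g₃^z`. -/
@[ext]
structure Heisenberg (r : ℤ) where
  x : ℤ
  y : ℤ
  z : ℤ

namespace Heisenberg

variable {r : ℤ}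

instance : Mul (Heisenberg r) := ⟨fun u v => ⟨u.x + v.x, u.y + v.y, u.z + v.z - r * v.x * u.y⟩⟩
instance : One (Heisenberg r) := ⟨⟨0, 0, 0⟩⟩
instance : Inv (Heisenberg r) := ⟨fun u => ⟨-u.x, -u.y, -u.z - r * u.x * u.y⟩⟩

@[simp] lemma mul_x (u v : Heisenberg r) : (u * v).x = u.x + v.x := rfl
@[simp] lemma mul_y (u v : Heisenberg r) : (u * v).y = u.y + v.y := rfl
@[simp] lemma mul_z (u v : Heisenberg r) : (u * v).z = u.z + v.z - r * v.x * u.y := rfl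
@[simp] lemma one_x : (1 : Heisenberg r).x = 0 := rfl
@[simp] lemma one_y : (1 : Heisenberg r).y = 0 := rfl
@[simp] lemma one_z : (1 : Heisenberg r).z = 0 := rfl
@[simp] lemma inv_x (u : Heisenberg r) : u⁻¹.x = -u.x := rfl
@[simp] lemma inv_y (u : Heisenberg r) : u⁻¹.y = -u.y := rfl
@[simp] lemma inv_z (u : Heisenberg r) : u⁻¹.z = -u.z - r * u.x * u.y := rfl

instance : Group (Heisenberg r) where
  mul_assoc u v w := by ext <;> simp <;> ring
  one_mul u := by ext <;> simp
  mul_one u := by ext <;> simp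
  inv_mul_cancel u := by ext <;> simp; ring

lemma mk_zpow {a b : ℤ} (c : ℤ) (hab : a * b = 0) (n : ℤ) :
    (⟨a, b, c⟩ : Heisenberg r) ^ n = ⟨n * a, n * b, n * c⟩ := by
  induction n using Int.induction_on with
  | zero => ext <;> simp
  | succ n ih =>
    rw [zpow_add_one, ih]
    ext
    · simp; ring
    · simp; ring
    · simp; linear_combination (-r * n) * hab
  | pred n ih =>
    rw [zpow_sub_one, ih]
    ext
    · simp; ring
    · simp; ring
    · simp; linear_combination (-r * n - r) * hab

lemma eq_zpow_mul_zpow_mul_zpow (u : Heisenberg r) :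
    u = (⟨1, 0, 0⟩ : Heisenberg r) ^ u.x * (⟨0, 1, 0⟩ : Heisenberg r) ^ u.y *
      (⟨0, 0, 1⟩ : Heisenberg r) ^ u.z := by
  simp only [mk_zpow _ (mul_zero _), mk_zpow _ (zero_mul _)]
  ext <;> simp

lemma hom_ext {M : Type*} [Group M] {f g : Heisenberg r →* M}
    (h₁ : f ⟨1, 0, 0⟩ = g ⟨1, 0, 0⟩) (h₂ : f ⟨0, 1, 0⟩ = g ⟨0, 1, 0⟩)
    (h₃ : f ⟨0, 0, 1⟩ = g ⟨0, 0, 1⟩) : f = g := by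
  ext u
  rw [eq_zpow_mul_zpow_mul_zpow u]
  simp only [map_mul, map_zpow, h₁, h₂, h₃]

end Heisenberg

/-- The division is exact: `a * (a - 1)` is even. -/
def triangle (a : ℤ) : ℤ := a * (a - 1) / 2

lemma two_mul_triangle (a : ℤ) : 2 * triangle a = a * (a - 1) :=
  Int.mul_ediv_cancel' (Int.even_mul_pred_self a).two_dvd

lemma triangle_add (a b : ℤ) : triangle (a + b) = triangle a + triangle b + a * b := by
  have h := two_mul_triangle (a + b)
  have ha := two_mul_triangle a
  have hb := two_mul_triangle b
  linarith

namespace Heisenberg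

variable (N : Matrix (Fin 2) (Fin 2) ℤ) (p q r : ℤ)

/-- `twistFun ⟨x, y, z⟩ = ⟨n₁₁, n₁₂, p⟩ ^ x * ⟨n₂₁, n₂₂, q⟩ ^ y * ⟨0, 0, z⟩`, expanded with
`⟨a, b, c⟩ ^ n = ⟨n a, n b, n c - r a b · triangle n⟩`. -/
def twistFun (u : Heisenberg r) : Heisenberg r :=
  ⟨u.x * N 0 0 + u.y * N 1 0, u.x * N 0 1 + u.y * N 1 1,
    u.z + u.x * p + u.y * q -
      r * (N 0 0 * N 0 1 * triangle u.x + N 1 0 * N 1 1 * triangle u.y +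
        N 0 1 * N 1 0 * (u.x * u.y))⟩

def twistInvFun (u : Heisenberg r) : Heisenberg r :=
  let x := u.x * N 1 1 - u.y * N 1 0
  let y := u.y * N 0 0 - u.x * N 0 1
  ⟨x, y, u.z - x * p - y * q +
    r * (N 0 0 * N 0 1 * triangle x + N 1 0 * N 1 1 * triangle y + N 0 1 * N 1 0 * (x * y))⟩

variable {N} (hN : N.det = 1)
include hN

def twist : MulAut (Heisenberg r) where
  toFun := twistFun N p q r
  invFun := twistInvFun N p q r
  left_inv u := by
    rw [Matrix.det_fin_two] at hN
    have hx : (twistFun N p q r u).x * N 1 1 - (twistFun N p q r u).y * N 1 0 = u.x := by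
      simp only [twistFun]; linear_combination u.x * hN
    have hy : (twistFun N p q r u).y * N 0 0 - (twistFun N p q r u).x * N 0 1 = u.y := by
      simp only [twistFun]; linear_combination u.y * hN
    ext
    · exact hx
    · exact hy
    · simp only [twistInvFun, hx, hy]
      simp only [twistFun]
      ring
  right_inv u := by
    rw [Matrix.det_fin_two] at hN
    ext
    · simp only [twistInvFun, twistFun]; linear_combination u.x * hN
    · simp only [twistInvFun, twistFun]; linear_combination u.y * hN
    · simp only [twistInvFun, twistFun]; ring
  map_mul' u v := by
    rw [Matrix.det_fin_two] at hN
    ext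
    · simp only [twistFun, mul_x, mul_y]; ring
    · simp only [twistFun, mul_x, mul_y]; ring
    · simp only [twistFun, mul_x, mul_y, mul_z, triangle_add]
      linear_combination (r * v.x * u.y) * hN

@[simp] lemma twist_e₁ : twist p q r hN ⟨1, 0, 0⟩ = ⟨N 0 0, N 0 1, p⟩ := by
  ext <;> simp [twist, twistFun, triangle]

@[simp] lemma twist_e₂ : twist p q r hN ⟨0, 1, 0⟩ = ⟨N 1 0, N 1 1, q⟩ := by
  ext <;> simp [twist, twistFun, triangle]

@[simp] lemma twist_e₃ : twist p q r hN ⟨0, 0, 1⟩ = ⟨0, 0, 1⟩ := by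
  ext <;> simp [twist, twistFun, triangle]

end Heisenberg

@[simps]
def Heisenberg.finFourEquiv (r : ℤ) : (Fin 4 → ℤ) ≃ Multiplicative ℤ × Heisenberg r where
  toFun n := (Multiplicative.ofAdd (n 0), ⟨n 1, n 2, n 3⟩)
  invFun x := ![x.1.toAdd, x.2.x, x.2.y, x.2.z]
  left_inv n := by ext i; fin_cases i <;> rfl
  right_inv x := rfl

open SemidirectProduct Multiplicative

abbrev GplusModel (N : Matrix (Fin 2) (Fin 2) ℤ) (p q r : ℤ) (hN : N.det = 1) :=
  Heisenberg r ⋊[zpowersHom (MulAut (Heisenberg r)) (Heisenberg.twist p q r hN)] Multiplicative ℤ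

namespace GplusModel

variable {N : Matrix (Fin 2) (Fin 2) ℤ} {p q r : ℤ} {hN : N.det = 1}

def gen : Fin 4 → GplusModel N p q r hN :=
  ![inr (ofAdd 1), inl ⟨1, 0, 0⟩, inl ⟨0, 1, 0⟩, inl ⟨0, 0, 1⟩]

lemma lift_gen_eq_one :
    ∀ w ∈ gplusRels N p q r, FreeGroup.lift (gen : Fin 4 → GplusModel N p q r hN) w = 1 := by
  intro w hw
  simp only [gplusRels, Set.mem_insert_iff, Set.mem_singleton_iff] at hw
  rcases hw with rfl | rfl | rfl | rfl | rfl | rfl <;>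
  · simp only [map_mul, map_inv, map_zpow, FreeGroup.lift_apply_of, gen, Matrix.cons_val]
    simp (failIfUnchanged := false) only [← map_zpow, Heisenberg.mk_zpow _ (mul_zero _),
      Heisenberg.mk_zpow _ (zero_mul _)]
    ext <;> simp

end GplusModel

namespace Gplus

open PresentedGroup

variable {N : Matrix (Fin 2) (Fin 2) ℤ} {p q r : ℤ} {hN : N.det = 1}

lemma commute_of_three (i : Fin 4) : Commute (of i : Gplus N p q r) (of 3) := by
  rcases eq_or_ne i 3 with rfl | hi
  · exact Commute.refl _
  refine (commutatorElement_eq_one_iff_commute.mp (one_of_mem (rels := gplusRels N p q r)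
    (x := FreeGroup.of 3 * FreeGroup.of i * (FreeGroup.of 3)⁻¹ * (FreeGroup.of i)⁻¹) ?_)).symm
  fin_cases i <;> simp_all [gplusRels]

lemma of_three_mem_center : (of 3 : Gplus N p q r) ∈ Subgroup.center (Gplus N p q r) := by
  have hcentralizer :
      Subgroup.closure (Set.range of) ≤ Subgroup.centralizer {(of 3 : Gplus N p q r)} := by
    rw [Subgroup.closure_le]
    rintro _ ⟨i, rfl⟩
    exact Subgroup.mem_centralizer_singleton_iff.mpr (commute_of_three i).eq
  rw [closure_range_of, top_le_iff] at hcentralizer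
  exact Subgroup.mem_center_iff.mpr fun g =>
    Subgroup.mem_centralizer_singleton_iff.mp (hcentralizer ▸ Subgroup.mem_top g)

lemma conj_of_one : (of 0 : Gplus N p q r) * of 1 * (of 0)⁻¹ =
    of 1 ^ N 0 0 * of 2 ^ N 0 1 * of 3 ^ p :=
  mul_inv_eq_one.mp <| one_of_mem (rels := gplusRels N p q r)
    (x := FreeGroup.of 0 * FreeGroup.of 1 * (FreeGroup.of 0)⁻¹ *
      (FreeGroup.of 1 ^ N 0 0 * FreeGroup.of 2 ^ N 0 1 * FreeGroup.of 3 ^ p)⁻¹)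
    (by simp [gplusRels])

lemma conj_of_two : (of 0 : Gplus N p q r) * of 2 * (of 0)⁻¹ =
    of 1 ^ N 1 0 * of 2 ^ N 1 1 * of 3 ^ q :=
  mul_inv_eq_one.mp <| one_of_mem (rels := gplusRels N p q r)
    (x := FreeGroup.of 0 * FreeGroup.of 2 * (FreeGroup.of 0)⁻¹ *
      (FreeGroup.of 1 ^ N 1 0 * FreeGroup.of 2 ^ N 1 1 * FreeGroup.of 3 ^ q)⁻¹)
    (by simp [gplusRels])

lemma of_two_mul_of_one : (of 2 : Gplus N p q r) * of 1 = of 1 * of 2 * of 3 ^ (-r) := by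
  have h : (of 1 : Gplus N p q r) * of 2 * (of 1)⁻¹ * (of 2)⁻¹ = of 3 ^ r :=
    mul_inv_eq_one.mp <| one_of_mem (x := FreeGroup.of 1 * FreeGroup.of 2 * (FreeGroup.of 1)⁻¹ *
      (FreeGroup.of 2)⁻¹ * (FreeGroup.of 3 ^ r)⁻¹) (by simp [gplusRels])
  rw [Subgroup.mem_center_iff.mp (Subgroup.zpow_mem _ of_three_mem_center _), zpow_neg, ← h]
  group

def ofHeisenberg : Heisenberg r →* Gplus N p q r where
  toFun u := of 1 ^ u.x * of 2 ^ u.y * of 3 ^ u.z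
  map_one' := by simp
  map_mul' u v := by
    have hz (k : ℤ) (g : Gplus N p q r) : g * of 3 ^ k = of 3 ^ k * g :=
      Subgroup.mem_center_iff.mp (Subgroup.zpow_mem _ of_three_mem_center k) g
    have hswap := zpow_mul_zpow_eq_mul_zpow_mul_zpow of_three_mem_center
      (of_two_mul_of_one (N := N) (p := p) (q := q) (r := r)) u.y v.x
    calc (of 1 : Gplus N p q r) ^ (u * v).x * of 2 ^ (u * v).y * of 3 ^ (u * v).z
        = of 1 ^ u.x * of 1 ^ v.x * of 2 ^ u.y * (of 2 ^ v.y * of 3 ^ (-r * u.y * v.x)) *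
            (of 3 ^ u.z * of 3 ^ v.z) := by
          simp only [Heisenberg.mul_x, Heisenberg.mul_y, Heisenberg.mul_z]
          group
      _ = of 1 ^ u.x * (of 2 ^ u.y * of 1 ^ v.x) * of 2 ^ v.y * (of 3 ^ u.z * of 3 ^ v.z) := by
          rw [hswap, hz _ (of 2 ^ v.y)]
          group
      _ = of 1 ^ u.x * of 2 ^ u.y * (of 1 ^ v.x * of 2 ^ v.y * of 3 ^ u.z) * of 3 ^ v.z := by
          group
      _ = of 1 ^ u.x * of 2 ^ u.y * of 3 ^ u.z * (of 1 ^ v.x * of 2 ^ v.y * of 3 ^ v.z) := by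
          rw [hz _ (of 1 ^ v.x * of 2 ^ v.y)]
          group

@[simp] lemma ofHeisenberg_apply (u : Heisenberg r) :
    (ofHeisenberg u : Gplus N p q r) = of 1 ^ u.x * of 2 ^ u.y * of 3 ^ u.z := rfl

lemma ofHeisenberg_twist (u : Heisenberg r) :
    (ofHeisenberg (Heisenberg.twist p q r hN u) : Gplus N p q r) =
      of 0 * ofHeisenberg u * (of 0)⁻¹ := by
  suffices h : ofHeisenberg.comp (Heisenberg.twist p q r hN).toMonoidHom =
      (MulAut.conj (of 0 : Gplus N p q r)).toMonoidHom.comp ofHeisenberg from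
    DFunLike.congr_fun h u
  refine Heisenberg.hom_ext ?_ ?_ ?_ <;> simp
  · exact conj_of_one.symm
  · exact conj_of_two.symm
  · rw [(commute_of_three 0).eq, mul_inv_cancel_right]

def ofModel : GplusModel N p q r hN →* Gplus N p q r :=
  SemidirectProduct.lift ofHeisenberg (zpowersHom _ (of 0)) fun g => by
    ext u
    exact ofHeisenberg.map_zpow_aut_apply _ _ (ofHeisenberg_twist (hN := hN)) g.toAdd u

def toModel : Gplus N p q r →* GplusModel N p q r hN :=
  PresentedGroup.toGroup GplusModel.lift_gen_eq_one

lemma toModel_comp_ofModel :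
    (toModel : Gplus N p q r →* GplusModel N p q r hN).comp ofModel = MonoidHom.id _ := by
  refine SemidirectProduct.hom_ext (Heisenberg.hom_ext ?_ ?_ ?_) (MonoidHom.ext_mint ?_)
  all_goals simp [ofModel, toModel, GplusModel.gen]

lemma ofModel_comp_toModel :
    (ofModel : GplusModel N p q r hN →* Gplus N p q r).comp toModel = MonoidHom.id _ := by
  refine PresentedGroup.ext fun i => ?_
  fin_cases i <;> simp [ofModel, toModel, GplusModel.gen]

def modelEquiv (hN : N.det = 1) : GplusModel N p q r hN ≃* Gplus N p q r :=
  ofModel.toMulEquiv toModel toModel_comp_ofModel ofModel_comp_toModel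

end Gplus

theorem stmt_0_general (N : Matrix (Fin 2) (Fin 2) ℤ) (hN : N.det = 1) (p q r : ℤ) :
    Function.Bijective (fun n : Fin 4 → ℤ =>
      (PresentedGroup.of 0 : Gplus N p q r) ^ n 0 * PresentedGroup.of 1 ^ n 1 *
        PresentedGroup.of 2 ^ n 2 * PresentedGroup.of 3 ^ n 3) := by
  have h : (fun n : Fin 4 → ℤ => (PresentedGroup.of 0 : Gplus N p q r) ^ n 0 *
      PresentedGroup.of 1 ^ n 1 * PresentedGroup.of 2 ^ n 2 * PresentedGroup.of 3 ^ n 3) =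
      Gplus.modelEquiv hN ∘ (fun x => inr x.1 * inl x.2) ∘ Heisenberg.finFourEquiv r := by
    funext n
    simp [Gplus.modelEquiv, Gplus.ofModel, mul_assoc]
  rw [h]
  exact (Gplus.modelEquiv hN).bijective.comp
    (bijective_inr_mul_inl.comp (Heisenberg.finFourEquiv r).bijective)

/-- Every element of `G⁺_{N,p,q,r}` can be written uniquely as
`g₀^{n₀} g₁^{n₁} g₂^{n₂} g₃^{n₃}` with `n₀,n₁,n₂,n₃ ∈ ℤ`. -/
theorem stmt_0 (N : Matrix (Fin 2) (Fin 2) ℤ) (hN : N.det = 1) (p q r : ℤ) (hr : r ≠ 0) :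
    Function.Bijective (fun n : Fin 4 → ℤ =>
      (PresentedGroup.of 0 : Gplus N p q r) ^ n 0 * PresentedGroup.of 1 ^ n 1 *
        PresentedGroup.of 2 ^ n 2 * PresentedGroup.of 3 ^ n 3) :=
  stmt_0_general N hN p q r
end

section
/- Let N = (n_ij) ∈ SL(2,ℤ) have real eigenvalues α > 1 and 1/α (equivalently tr N > 2), and let p, q, r be integers with r ≠ 0. Then the center of G⁺_{N,p,q,r} is the infinite cyclic subgroup generated by g₃ (in particular g₃ has infinite order). -/
/-!
Every element of `G⁺` can be written as `g₀ᵃ g₁ᵇ g₂ᶜ g₃ᵈ`: the elements `g₁ᵇ g₂ᶜ g₃ᵈ` form a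
Heisenberg-type subgroup which `g₀` normalizes, acting on `(b, c)` by `(b, c) ↦ (b, c) N`.
To read off the exponents, map `G⁺` to `H ⋊ Aut H`, where `H` is the real Heisenberg group in
symmetric coordinates: `g₁, g₂` go to the unit translations, `g₃` to the central element `(0, 1/r)`,
and `g₀` to the automorphism with linear part `N`, which exists because `SL₂` preserves the
symplectic form (a linear central term absorbs `p` and `q`). In this model `g₃` has infinite order.
If `g₀ᵃ g₁ᵇ g₂ᶜ g₃ᵈ` is central, commuting with `g₁` and `g₂` forces `Nᵃ` to fix `e₁` and `e₂`;
pairing with an `α`-eigenvector of `N` gives `αᵃ = 1`, so `a = 0`. Commuting with `g₀` then forces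
`(b, c) N = (b, c)`, whence `b = c = 0` because `det (N - 1) = 2 - tr N ≠ 0`.
-/

open scoped commutatorElement Pointwise

theorem zpow_mul_zpow_eq_of_commutatorElement_eq {G : Type*} [Group G] {x y z : G}
    (hxz : Commute x z) (hyz : Commute y z) (h : ⁅x, y⁆ = z) (b c : ℤ) :
    y ^ c * x ^ b = x ^ b * y ^ c * z ^ (-(b * c)) := by
  have hxy : SemiconjBy x y (z * y) := by
    rw [SemiconjBy, ← h, commutatorElement_def]; group
  have hxyc : x * y ^ c = z ^ c * y ^ c * x := by
    rw [(hxy.zpow_right c).eq, hyz.symm.mul_zpow]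
  have hyx : SemiconjBy (y ^ c) x (x * z ^ (-c)) :=
    calc y ^ c * x = z ^ (-c) * (z ^ c * y ^ c * x) := by group
      _ = x * z ^ (-c) * y ^ c := by rw [← hxyc, ← mul_assoc, ((hxz.zpow_right (-c)).eq).symm]
  rw [(hyx.zpow_right b).eq, (hxz.zpow_right (-c)).mul_zpow, ← zpow_mul, mul_assoc,
    ((hyz.zpow_zpow c (-c * b)).eq).symm, ← mul_assoc, neg_mul, mul_comm c b]

section Relations

variable {G : Type*} [Group G]

structure SatisfiesGplusRels (N : Matrix (Fin 2) (Fin 2) ℤ) (p q r : ℤ) (g : Fin 4 → G) :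
    Prop where
  conj_one : g 0 * g 1 * (g 0)⁻¹ = g 1 ^ N 0 0 * g 2 ^ N 0 1 * g 3 ^ p
  conj_two : g 0 * g 2 * (g 0)⁻¹ = g 1 ^ N 1 0 * g 2 ^ N 1 1 * g 3 ^ q
  commutator : ⁅g 1, g 2⁆ = g 3 ^ r
  commute : ∀ i, Commute (g 3) (g i)

variable {N : Matrix (Fin 2) (Fin 2) ℤ} {p q r : ℤ}

theorem lift_eq_one_of_mem_gplusRels_iff (g : Fin 4 → G) :
    (∀ w ∈ gplusRels N p q r, FreeGroup.lift g w = 1) ↔ SatisfiesGplusRels N p q r g := by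
  have hc (i : Fin 4) : g 3 * g i * (g 3)⁻¹ = g i ↔ Commute (g 3) (g i) := mul_inv_eq_iff_eq_mul
  simp only [gplusRels, Set.mem_insert_iff, Set.mem_singleton_iff, forall_eq_or_imp, forall_eq,
    map_mul, map_inv, map_zpow, FreeGroup.lift_apply_of, mul_inv_eq_one, hc]
  constructor
  · rintro ⟨h₁, h₂, h₃, h₀₃, h₁₃, h₂₃⟩
    exact ⟨h₁, h₂, h₃, by intro i; fin_cases i; exacts [h₀₃, h₁₃, h₂₃, Commute.refl _]⟩
  · rintro ⟨h₁, h₂, h₃, h⟩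
    exact ⟨h₁, h₂, h₃, h 0, h 1, h 2⟩

variable (N p q r) in
theorem satisfiesGplusRels_of :
    SatisfiesGplusRels N p q r (PresentedGroup.of : Fin 4 → Gplus N p q r) := by
  have hmk : FreeGroup.lift PresentedGroup.of = PresentedGroup.mk (gplusRels N p q r) :=
    FreeGroup.ext_hom _ _ fun _ => rfl
  exact (lift_eq_one_of_mem_gplusRels_iff _).mp fun w hw => hmk ▸ PresentedGroup.one_of_mem hw

def heisElt (g : Fin 4 → G) (v : Fin 2 → ℤ) (d : ℤ) : G := g 1 ^ v 0 * g 2 ^ v 1 * g 3 ^ d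

theorem map_heisElt {H : Type*} [Group H] (f : G →* H) (g : Fin 4 → G) (v : Fin 2 → ℤ) (d : ℤ) :
    f (heisElt g v d) = heisElt (f ∘ g) v d := by
  simp [heisElt]

namespace SatisfiesGplusRels

variable {g : Fin 4 → G} (hg : SatisfiesGplusRels N p q r g)
include hg

theorem zpow_three_commute (k : ℤ) (i : Fin 4) (m : ℤ) : g 3 ^ k * g i ^ m = g i ^ m * g 3 ^ k :=
  ((hg.commute i).zpow_zpow k m).eq

theorem heisElt_mul (v v' : Fin 2 → ℤ) (d d' : ℤ) :
    heisElt g v d * heisElt g v' d' = heisElt g (v + v') (d + d' - r * (v' 0 * v 1)) := by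
  have hswap : g 2 ^ v 1 * g 1 ^ v' 0 = g 1 ^ v' 0 * g 2 ^ v 1 * g 3 ^ (-(r * (v' 0 * v 1))) := by
    rw [zpow_mul_zpow_eq_of_commutatorElement_eq ((hg.commute 1).zpow_left r).symm
      ((hg.commute 2).zpow_left r).symm hg.commutator, ← zpow_mul, mul_neg]
  have hswap' : g 2 ^ v 1 * (g 1 ^ v' 0 * g 2 ^ v' 1) =
      g 1 ^ v' 0 * g 2 ^ v 1 * g 2 ^ v' 1 * g 3 ^ (-(r * (v' 0 * v 1))) := by
    rw [← mul_assoc, hswap, mul_assoc _ (g 3 ^ _), hg.zpow_three_commute, ← mul_assoc]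
  have hmove : g 3 ^ d * (g 1 ^ v' 0 * g 2 ^ v' 1) = g 1 ^ v' 0 * g 2 ^ v' 1 * g 3 ^ d := by
    rw [← mul_assoc, hg.zpow_three_commute, mul_assoc, hg.zpow_three_commute, mul_assoc]
  calc heisElt g v d * heisElt g v' d'
      = g 1 ^ v 0 * (g 2 ^ v 1 * (g 1 ^ v' 0 * g 2 ^ v' 1)) * g 3 ^ d * g 3 ^ d' := by
        simp only [heisElt, mul_assoc, ← hmove]
    _ = _ := by rw [hswap']; simp only [heisElt, Pi.add_apply]; group

theorem conj_three : g 0 * g 3 * (g 0)⁻¹ = g 3 := by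
  rw [← (hg.commute 0).eq]; group

theorem heisElt_inv (v : Fin 2 → ℤ) (d : ℤ) :
    (heisElt g v d)⁻¹ = heisElt g (-v) (-d - r * (v 0 * v 1)) := by
  refine inv_eq_of_mul_eq_one_right ?_
  rw [hg.heisElt_mul, add_neg_cancel, Pi.neg_apply,
    show d + (-d - r * (v 0 * v 1)) - r * (-v 0 * v 1) = 0 by ring]
  simp [heisElt]

theorem exists_heisElt_zpow (v : Fin 2 → ℤ) (d n : ℤ) :
    ∃ e, heisElt g v d ^ n = heisElt g (n • v) e := by
  induction n using Int.induction_on with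
  | zero => exact ⟨0, by simp [heisElt]⟩
  | succ k ih =>
    obtain ⟨e, he⟩ := ih
    exact ⟨_, by rw [zpow_add_one, he, hg.heisElt_mul, add_smul, one_smul]⟩
  | pred k ih =>
    obtain ⟨e, he⟩ := ih
    exact ⟨_, by rw [zpow_sub_one, he, hg.heisElt_inv, hg.heisElt_mul, ← sub_eq_add_neg,
      sub_smul, one_smul]⟩

theorem exists_conj_heisElt (v : Fin 2 → ℤ) (d : ℤ) :
    ∃ e, g 0 * heisElt g v d * (g 0)⁻¹ = heisElt g (Matrix.vecMul v N) e := by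
  obtain ⟨e₁, h₁⟩ := hg.exists_heisElt_zpow (N 0) p (v 0)
  obtain ⟨e₂, h₂⟩ := hg.exists_heisElt_zpow (N 1) q (v 1)
  have hvN : Matrix.vecMul v N = v 0 • N 0 + v 1 • N 1 + 0 := by
    ext j; simp [Matrix.vecMul, dotProduct, Fin.sum_univ_two]
  exact ⟨_, calc g 0 * heisElt g v d * (g 0)⁻¹ = MulAut.conj (g 0) (heisElt g v d) := rfl
    _ = heisElt g (N 0) p ^ v 0 * heisElt g (N 1) q ^ v 1 * heisElt g 0 d := by
      simp only [heisElt, map_mul, map_zpow, MulAut.conj_apply, hg.conj_one, hg.conj_two,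
        hg.conj_three, Pi.zero_apply, zpow_zero, one_mul]
    _ = _ := by rw [h₁, h₂, hg.heisElt_mul, hg.heisElt_mul, hvN]⟩

def heisSubgroup : Subgroup G where
  carrier := {x | ∃ v d, heisElt g v d = x}
  mul_mem' := by
    rintro _ _ ⟨v, d, rfl⟩ ⟨v', d', rfl⟩
    exact ⟨_, _, (hg.heisElt_mul v v' d d').symm⟩
  one_mem' := ⟨0, 0, by simp [heisElt]⟩
  inv_mem' := by
    rintro _ ⟨v, d, rfl⟩
    exact ⟨_, _, (hg.heisElt_inv v d).symm⟩

theorem mem_normalizer_heisSubgroup (hN : IsUnit N.det) :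
    g 0 ∈ Subgroup.normalizer (hg.heisSubgroup : Set G) := by
  refine Subgroup.mem_normalizer_iff.mpr fun x => ⟨?_, ?_⟩
  · rintro ⟨v, d, rfl⟩
    obtain ⟨e, he⟩ := hg.exists_conj_heisElt v d
    exact ⟨_, _, he.symm⟩
  · rintro ⟨w, d, hx⟩
    set v := Matrix.vecMul w N⁻¹
    obtain ⟨e, he⟩ := hg.exists_conj_heisElt v 0
    rw [Matrix.vecMul_vecMul, Matrix.nonsing_inv_mul N hN, Matrix.vecMul_one] at he
    have hconj : g 0 * heisElt g v (d - e) * (g 0)⁻¹ = heisElt g w d := by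
      calc g 0 * heisElt g v (d - e) * (g 0)⁻¹
          = g 0 * heisElt g v 0 * (g 0)⁻¹ * (g 0 * g 3 * (g 0)⁻¹) ^ (d - e) := by
            rw [conj_zpow]; simp only [heisElt]; group
        _ = heisElt g w d := by
            rw [he, hg.conj_three]; simp only [heisElt]; group
    exact ⟨v, d - e, (MulAut.conj (g 0)).injective (by simp only [MulAut.conj_apply, hconj, hx])⟩

theorem exists_eq_zpow_mul_heisElt (hN : IsUnit N.det) {x : G}
    (hx : x ∈ Subgroup.closure (Set.range g)) :
    ∃ (a : ℤ) (v : Fin 2 → ℤ) (d : ℤ), x = g 0 ^ a * heisElt g v d := by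
  have hgen : Subgroup.closure (Set.range g) ≤ Subgroup.zpowers (g 0) ⊔ hg.heisSubgroup := by
    rw [Subgroup.closure_le]
    rintro _ ⟨i, rfl⟩
    fin_cases i
    · exact Subgroup.mem_sup_left (Subgroup.mem_zpowers _)
    · exact Subgroup.mem_sup_right ⟨![1, 0], 0, by simp [heisElt]⟩
    · exact Subgroup.mem_sup_right ⟨![0, 1], 0, by simp [heisElt]⟩
    · exact Subgroup.mem_sup_right ⟨0, 1, by simp [heisElt]⟩
  have hmul := Subgroup.coe_mul_of_left_le_normalizer_right _ _
    (Subgroup.zpowers_le.mpr (hg.mem_normalizer_heisSubgroup hN))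
  obtain ⟨_, ⟨a, rfl⟩, _, ⟨v, d, rfl⟩, rfl⟩ :
      x ∈ (Subgroup.zpowers (g 0) : Set G) * (hg.heisSubgroup : Set G) :=
    hmul ▸ SetLike.mem_coe.mpr (hgen hx)
  exact ⟨a, v, d, rfl⟩

theorem commute_three_of_mem_closure {x : G} (hx : x ∈ Subgroup.closure (Set.range g)) :
    Commute (g 3) x := by
  suffices Subgroup.closure (Set.range g) ≤ Subgroup.centralizer {g 3} from
    (Subgroup.mem_centralizer_singleton_iff.mp (this hx)).symm
  rw [Subgroup.closure_le]
  rintro _ ⟨i, rfl⟩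
  exact Subgroup.mem_centralizer_singleton_iff.mpr (hg.commute i).symm

end SatisfiesGplusRels

end Relations

@[ext] structure Heis (R : Type*) where
  v : Fin 2 → R
  z : R

namespace Heis

open Matrix

variable {R : Type*} [Field R]

instance : Mul (Heis R) :=
  ⟨fun a b => ⟨a.v + b.v, a.z + b.z + (a.v 0 * b.v 1 - a.v 1 * b.v 0) / 2⟩⟩
instance : One (Heis R) := ⟨⟨0, 0⟩⟩
instance : Inv (Heis R) := ⟨fun a => ⟨-a.v, -a.z⟩⟩

@[simp] lemma mul_v (a b : Heis R) : (a * b).v = a.v + b.v := rfl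
@[simp] lemma mul_z (a b : Heis R) :
    (a * b).z = a.z + b.z + (a.v 0 * b.v 1 - a.v 1 * b.v 0) / 2 := rfl
@[simp] lemma one_v : (1 : Heis R).v = 0 := rfl
@[simp] lemma one_z : (1 : Heis R).z = 0 := rfl
@[simp] lemma inv_v (a : Heis R) : a⁻¹.v = -a.v := rfl
@[simp] lemma inv_z (a : Heis R) : a⁻¹.z = -a.z := rfl

instance : Group (Heis R) where
  mul_assoc a b c := by ext <;> simp <;> ring
  one_mul a := by ext <;> simp
  mul_one a := by ext <;> simp
  inv_mul_cancel a := by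
    ext <;> simp only [mul_v, mul_z, inv_v, inv_z, one_v, one_z, Pi.add_apply, Pi.neg_apply,
      Pi.zero_apply] <;> ring

@[simp] lemma mk_zpow (v : Fin 2 → R) (z : R) (n : ℤ) :
    (⟨v, z⟩ : Heis R) ^ n = ⟨n • v, n • z⟩ := by
  induction n using Int.induction_on with
  | zero => ext <;> simp
  | succ k ih =>
    rw [_root_.zpow_add_one, ih]
    ext <;> simp only [mul_v, mul_z, Pi.add_apply, Pi.smul_apply] <;> ring
  | pred k ih =>
    rw [_root_.zpow_sub_one, ih]
    ext <;> simp only [mul_v, mul_z, inv_v, inv_z, Pi.add_apply, Pi.neg_apply, Pi.smul_apply] <;>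
      ring

def aut (M : Matrix (Fin 2) (Fin 2) R) (hM : M.det = 1) (s : Fin 2 → R) : Heis R ≃* Heis R where
  toFun w := ⟨w.v ᵥ* M, w.z + w.v ⬝ᵥ s⟩
  invFun w := ⟨w.v ᵥ* M.adjugate, w.z - (w.v ᵥ* M.adjugate) ⬝ᵥ s⟩
  left_inv w := by simp [vecMul_vecMul, mul_adjugate, hM]
  right_inv w := by simp [vecMul_vecMul, adjugate_mul, hM]
  map_mul' a b := by
    rw [det_fin_two] at hM
    ext
    · simp [add_vecMul]
    · simp [vecMul, dotProduct, Fin.sum_univ_two]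
      linear_combination (a.v 1 * b.v 0 - a.v 0 * b.v 1) / 2 * hM

variable {M : Matrix (Fin 2) (Fin 2) R} (hM : M.det = 1) (s : Fin 2 → R)

@[simp] lemma aut_apply_v (w : Heis R) : (aut M hM s w).v = w.v ᵥ* M := rfl
@[simp] lemma aut_apply_z (w : Heis R) : (aut M hM s w).z = w.z + w.v ⬝ᵥ s := rfl

theorem aut_zpow_apply_v_dotProduct {u : Fin 2 → R} {c : R} (hc : c ≠ 0) (hu : M *ᵥ u = c • u)
    (n : ℤ) (w : Heis R) : ((aut M hM s ^ n) w).v ⬝ᵥ u = c ^ n * (w.v ⬝ᵥ u) := by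
  have hstep (w : Heis R) : (aut M hM s w).v ⬝ᵥ u = c * (w.v ⬝ᵥ u) := by
    rw [aut_apply_v, ← dotProduct_mulVec, hu, dotProduct_smul, smul_eq_mul]
  induction n using Int.induction_on generalizing w with
  | zero => simp
  | succ k ih => rw [_root_.zpow_add_one, MulAut.mul_apply, ih, hstep, zpow_add_one₀ hc]; ring
  | pred k ih =>
    have h := hstep ((aut M hM s)⁻¹ w)
    rw [MulAut.apply_inv_self] at h
    rw [_root_.zpow_sub_one, MulAut.mul_apply, ih, zpow_sub_one₀ hc, h]
    field_simp

theorem commute_mk_zero (z : R) (w : Heis R) : Commute ⟨0, z⟩ w := by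
  ext <;> simp [add_comm]

theorem not_isOfFinOrder_mk_zero [CharZero R] {z : R} (hz : z ≠ 0) :
    ¬ IsOfFinOrder (⟨0, z⟩ : Heis R) := by
  rw [isOfFinOrder_iff_pow_eq_one]
  rintro ⟨n, hn, hpow⟩
  rw [← zpow_natCast, mk_zpow] at hpow
  have := congrArg Heis.z hpow
  simp [hn.ne', hz] at this

open SemidirectProduct in
theorem right_apply_v_eq_of_commute_inl {y : Heis R ⋊[MonoidHom.id _] MulAut (Heis R)}
    {h : Heis R} (hy : Commute y (inl h)) : (y.right h).v = h.v := by
  have := congrArg (fun x => x.left.v) hy.eq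
  simp only [mul_left, left_inl, right_inl, map_one, MulAut.one_apply, MonoidHom.id_apply,
    mul_v] at this
  rwa [add_comm, add_left_inj] at this

end Heis

namespace Matrix

theorem exists_mulVec_eq_smul_of_det_eq_one {K : Type*} [Field K] {M : Matrix (Fin 2) (Fin 2) K}
    (hdet : M.det = 1) {α : K} (hα : α ≠ 0) (htr : M.trace = α + α⁻¹) :
    ∃ u ≠ 0, M *ᵥ u = α • u := by
  have hchar : (M - α • 1).det = 0 := by
    rw [det_fin_two] at hdet ⊢
    rw [trace_fin_two] at htr
    simp
    linear_combination hdet - α * htr - mul_inv_cancel₀ hα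
  obtain ⟨u, hu, h⟩ := exists_mulVec_eq_zero_iff.mpr hchar
  refine ⟨u, hu, ?_⟩
  rwa [sub_mulVec, smul_mulVec, one_mulVec, sub_eq_zero] at h

theorem eq_zero_of_vecMul_eq_self {K : Type*} [Field K] {M : Matrix (Fin 2) (Fin 2) K}
    (hdet : M.det = 1) (htr : M.trace ≠ 2) {v : Fin 2 → K} (hv : v ᵥ* M = v) : v = 0 := by
  by_contra h
  have hfix : (M - 1).det = 0 :=
    exists_vecMul_eq_zero_iff.mp ⟨v, h, by rw [vecMul_sub, vecMul_one, hv, sub_self]⟩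
  rw [det_fin_two] at hfix hdet
  rw [trace_fin_two] at htr
  simp at hfix
  exact htr (by linear_combination hdet - hfix)

end Matrix

theorem SemidirectProduct.apply_eq_of_commute_inl_inr {N G : Type*} [Group N] [Group G]
    {φ : G →* MulAut N} {n : N} {g : G} (h : Commute (inl n : N ⋊[φ] G) (inr g)) : φ g n = n := by
  simpa using (congrArg SemidirectProduct.left h.eq).symm

section Model

open Matrix SemidirectProduct

variable {N : Matrix (Fin 2) (Fin 2) ℤ} (hN : N.det = 1) {p q r : ℤ}
include hN

theorem det_map_intCast_eq_one : (N.map ((↑) : ℤ → ℝ)).det = 1 := by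
  simpa [hN] using ((Int.castRingHom ℝ).map_det N).symm

variable (p q r) in
/-- The translation part makes `⟨e₁, 0⟩` go to `⟨e₁, 0⟩ ^ n₁₁ * ⟨e₂, 0⟩ ^ n₁₂ * ⟨0, 1 / r⟩ ^ p`,
which equals `⟨(n₁₁, n₁₂), n₁₁ n₁₂ / 2 + p / r⟩`; likewise for `e₂`. -/
noncomputable def gplusModelAut : MulAut (Heis ℝ) :=
  Heis.aut _ (det_map_intCast_eq_one hN) ![N 0 0 * N 0 1 / 2 + p / r, N 1 0 * N 1 1 / 2 + q / r]

variable (p q r) in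
/-- `⟨0, 1 / r⟩` is an `r`-th root of the commutator `⟨0, 1⟩` of the two unit translations. -/
noncomputable def gplusModel : Fin 4 → Heis ℝ ⋊[MonoidHom.id _] MulAut (Heis ℝ) :=
  ![inr (gplusModelAut hN p q r), inl ⟨![1, 0], 0⟩, inl ⟨![0, 1], 0⟩, inl ⟨0, (r : ℝ)⁻¹⟩]

variable (hr : r ≠ 0)
include hr

theorem satisfiesGplusRels_gplusModel : SatisfiesGplusRels N p q r (gplusModel hN p q r) := by
  have hconj (φ : MulAut (Heis ℝ)) (w : Heis ℝ) :
      (inr φ * inl w * (inr φ)⁻¹ : Heis ℝ ⋊[MonoidHom.id _] MulAut (Heis ℝ)) = inl (φ w) := by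
    rw [← map_inv]; exact (inl_aut φ w).symm
  refine ⟨?conj_one, ?conj_two, ?_, ?_⟩
  case conj_one | conj_two =>
    simp only [gplusModel, Matrix.cons_val, hconj, ← map_zpow, ← map_mul]
    congr 1
    ext i
    · fin_cases i <;> simp [gplusModelAut, vecMul, dotProduct, Fin.sum_univ_two]
    · simp [gplusModelAut, dotProduct, Fin.sum_univ_two]
      ring
  · simp only [gplusModel, Matrix.cons_val, commutatorElement_def, ← map_zpow, ← map_inv,
      ← map_mul]
    congr 1
    ext i
    · fin_cases i <;> simp 
    · simp [hr]
      norm_num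
  · intro i
    fin_cases i
    · ext <;> simp [gplusModel, gplusModelAut]
    all_goals exact (Heis.commute_mk_zero _ _).map inl

noncomputable def gplusModelHom : Gplus N p q r →* Heis ℝ ⋊[MonoidHom.id _] MulAut (Heis ℝ) :=
  PresentedGroup.toGroup ((lift_eq_one_of_mem_gplusRels_iff _).mpr
    (satisfiesGplusRels_gplusModel hN hr))

theorem gplusModelHom_of (i : Fin 4) :
    gplusModelHom hN hr (PresentedGroup.of i : Gplus N p q r) = gplusModel hN p q r i :=
  PresentedGroup.toGroup.of _

theorem gplusModelHom_heisElt (v : Fin 2 → ℤ) (d : ℤ) :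
    gplusModelHom hN hr (heisElt (PresentedGroup.of : Fin 4 → Gplus N p q r) v d) =
      inl ⟨fun i => (v i : ℝ), v 0 * v 1 / 2 + d / r⟩ := by
  rw [map_heisElt, show gplusModelHom hN hr ∘ PresentedGroup.of = gplusModel hN p q r from
    funext (gplusModelHom_of hN hr)]
  simp only [heisElt, gplusModel, Matrix.cons_val, ← map_zpow, ← map_mul]
  congr 1
  ext i
  · fin_cases i <;> simp 
  · simp 
    ring

theorem eq_zero_of_zpow_mul_heisElt_mem_center {α : ℝ} (hα : 1 < α)
    (htr : (N 0 0 : ℝ) + N 1 1 = α + 1 / α) {a : ℤ} {v : Fin 2 → ℤ} {d : ℤ}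
    (hx : PresentedGroup.of 0 ^ a * heisElt PresentedGroup.of v d ∈
      Subgroup.center (Gplus N p q r)) : a = 0 := by
  set x := PresentedGroup.of 0 ^ a * heisElt PresentedGroup.of v d with hxdef
  have hy (i : Fin 4) : Commute (gplusModelHom hN hr x) (gplusModel hN p q r i) := by
    rw [← gplusModelHom_of hN hr]
    exact (Commute.symm (Subgroup.mem_center_iff.mp hx _)).map _
  have hright : (gplusModelHom hN hr x).right = gplusModelAut hN p q r ^ a := by
    rw [hxdef, map_mul, map_zpow, gplusModelHom_heisElt, gplusModelHom_of]
    simp [gplusModel, ← map_zpow]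
  obtain ⟨u, hu0, hu⟩ := exists_mulVec_eq_smul_of_det_eq_one (det_map_intCast_eq_one hN)
    (by positivity : α ≠ 0) (by simpa [trace_fin_two] using htr)
  have hfix (h : Heis ℝ) (hh : Commute (gplusModelHom hN hr x) (inl h)) :
      α ^ a * (h.v ⬝ᵥ u) = h.v ⬝ᵥ u :=
    calc α ^ a * (h.v ⬝ᵥ u) = ((gplusModelAut hN p q r ^ a) h).v ⬝ᵥ u :=
          (Heis.aut_zpow_apply_v_dotProduct _ _ (by positivity) hu a h).symm
      _ = h.v ⬝ᵥ u := by rw [← hright, Heis.right_apply_v_eq_of_commute_inl hh]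
  have h₁ := hfix _ (hy 1)
  have h₂ := hfix _ (hy 2)
  simp only [Matrix.cons_val, dotProduct, Fin.sum_univ_two] at h₁ h₂
  obtain ⟨i, hi⟩ := Function.ne_iff.mp hu0
  refine (zpow_eq_one_iff_right₀ (by positivity) hα.ne').mp (mul_right_cancel₀ hi ?_)
  fin_cases i
  · simpa using h₁
  · simpa using h₂

theorem eq_zero_of_heisElt_mem_center {α : ℝ} (hα : 1 < α)
    (htr : (N 0 0 : ℝ) + N 1 1 = α + 1 / α) {v : Fin 2 → ℤ} {d : ℤ}
    (hx : heisElt PresentedGroup.of v d ∈ Subgroup.center (Gplus N p q r)) : v = 0 := by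
  have hcomm := (Commute.symm (Subgroup.mem_center_iff.mp hx (PresentedGroup.of 0))).map
    (gplusModelHom hN hr)
  rw [gplusModelHom_heisElt, gplusModelHom_of] at hcomm
  have hfix := congrArg Heis.v (apply_eq_of_commute_inl_inr hcomm)
  have htr_ne_two : (N.map ((↑) : ℤ → ℝ)).trace ≠ 2 := by
    rw [trace_fin_two]
    simp only [map_apply, htr]
    intro h
    have hsq : (α - 1) ^ 2 = 0 := by
      field_simp at h
      linear_combination h
    linarith [pow_eq_zero_iff (n := 2) two_ne_zero |>.mp hsq]
  have := eq_zero_of_vecMul_eq_self (det_map_intCast_eq_one hN) htr_ne_two hfix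
  ext i
  simpa using congrFun this i

theorem not_isOfFinOrder_of_three : ¬ IsOfFinOrder (PresentedGroup.of 3 : Gplus N p q r) := by
  intro h
  have := (gplusModelHom hN hr).isOfFinOrder h
  simp only [gplusModelHom_of, gplusModel, Matrix.cons_val] at this
  exact Heis.not_isOfFinOrder_mk_zero (by simpa using hr) (inl_injective.isOfFinOrder_iff.mp this)

end Model

/-- If `N ∈ SL(2,ℤ)` has real eigenvalues `α > 1` and `1/α` (equivalently `tr N > 2`)
and `r ≠ 0`, then the center of `G⁺_{N,p,q,r}` is the infinite cyclic subgroup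
generated by `g₃`; in particular `g₃` has infinite order. -/
theorem stmt_1 (N : Matrix (Fin 2) (Fin 2) ℤ) (hN : N.det = 1)
    (hα : ∃ α : ℝ, 1 < α ∧ ((N 0 0 : ℝ) + (N 1 1 : ℝ)) = α + 1 / α)
    (p q r : ℤ) (hr : r ≠ 0) :
    Subgroup.center (Gplus N p q r) =
      Subgroup.zpowers (PresentedGroup.of 3 : Gplus N p q r) ∧
    ¬ IsOfFinOrder (PresentedGroup.of 3 : Gplus N p q r) := by
  obtain ⟨α, hα, htr⟩ := hα
  have hg := satisfiesGplusRels_of N p q r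
  have hgen (x : Gplus N p q r) : x ∈ Subgroup.closure (Set.range PresentedGroup.of) := by
    simp [PresentedGroup.closure_range_of]
  refine ⟨le_antisymm (fun x hx => ?_) ?_, not_isOfFinOrder_of_three hN hr⟩
  · obtain ⟨a, v, d, rfl⟩ := hg.exists_eq_zpow_mul_heisElt (by simp [hN]) (hgen x)
    obtain rfl := eq_zero_of_zpow_mul_heisElt_mem_center hN hr hα htr hx
    rw [zpow_zero, one_mul] at hx ⊢
    obtain rfl := eq_zero_of_heisElt_mem_center hN hr hα htr hx
    exact ⟨d, by simp [heisElt]⟩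
  · rw [Subgroup.zpowers_le, Subgroup.mem_center_iff]
    exact fun y => (hg.commute_three_of_mem_closure (hgen y)).eq.symm
end

section
/- Let N = (n_ij) ∈ GL(2,ℤ) with det N = −1 have real eigenvalues α > 1 and −1/α, with eigenvectors a = (a₁,a₂)ᵀ, b = (b₁,b₂)ᵀ ∈ ℝ² satisfying N a = α a and N b = (−1/α) b. Let p, q, r be integers with r ≠ 0, set θ = a₁b₂ − a₂b₁, set eᵢ = (1/2) n_{i1}(n_{i1}−1) a₁ b₁ + (1/2) n_{i2}(n_{i2}−1) a₂ b₂ + n_{i1} n_{i2} b₁ a₂ for i = 1,2, and suppose c = (c₁,c₂)ᵀ ∈ ℝ² satisfies (N + I) c + (e₁,e₂)ᵀ − (θ/r)(p,q)ᵀ = 0. Then (N + I) (c₁ − a₁b₁/2, c₂ − a₂b₂/2)ᵀ = (θ/r) (p + (r/2) n₁₁ n₁₂, q + (r/2) n₂₁ n₂₂)ᵀ. -/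
/-!
Since `a` and `b` are eigenvectors of `N` whose eigenvalues multiply to `-1`, we have
`(N a)ᵢ (N b)ᵢ = -aᵢ bᵢ`. Expanding this product eliminates the squares `nᵢⱼ²` from `eᵢ`, leaving
`e = -½ (N + I)(a ⊙ b) - (θ/2) (nᵢ₁ nᵢ₂)ᵢ`; substituting this into the equation for `c` gives the claim.
-/

open Matrix

lemma mulVec_mul_mulVec_of_eigen {ι R : Type*} [Fintype ι] [CommRing R] {M : Matrix ι ι R}
    {a b : ι → R} {α β : R} (ha : M *ᵥ a = α • a) (hb : M *ᵥ b = β • b) :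
    M *ᵥ a * M *ᵥ b = (α * β) • (a * b) := by
  rw [ha, hb, smul_mul_smul_comm]

lemma half_quadratic_eq_of_mulVec_mul_mulVec_eq_neg (M : Matrix (Fin 2) (Fin 2) ℝ)
    {a b : Fin 2 → ℝ} (h : M *ᵥ a * M *ᵥ b = -(a * b)) :
    (fun i ↦ 1 / 2 * M i 0 * (M i 0 - 1) * a 0 * b 0 + 1 / 2 * M i 1 * (M i 1 - 1) * a 1 * b 1 +
        M i 0 * M i 1 * b 0 * a 1) =
      -(1 / 2 : ℝ) • (M *ᵥ (a * b) + a * b) -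
        ((a 0 * b 1 - a 1 * b 0) / 2) • ![M 0 0 * M 0 1, M 1 0 * M 1 1] := by
  have h₀ := congrFun h 0
  have h₁ := congrFun h 1
  rw [funext_iff, Fin.forall_fin_two]
  simp only [mulVec_fin_two, Pi.add_apply, Pi.sub_apply, Pi.mul_apply, Pi.neg_apply,
    Pi.smul_apply, smul_eq_mul, cons_val_zero, cons_val_one, cons_val_fin_one] at h₀ h₁ ⊢
  exact ⟨by linear_combination h₀ / 2, by linear_combination h₁ / 2⟩

theorem stmt_14_general (N : Matrix (Fin 2) (Fin 2) ℤ)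
    (α : ℝ) (hα : 1 < α) (a b : Fin 2 → ℝ)
    (ha : (N.map (Int.cast : ℤ → ℝ)).mulVec a = α • a)
    (hb : (N.map (Int.cast : ℤ → ℝ)).mulVec b = (-(1 / α)) • b)
    (p q r : ℤ) (hr : r ≠ 0) (θ : ℝ) (hθ : θ = a 0 * b 1 - a 1 * b 0)
    (e : Fin 2 → ℝ)
    (he : ∀ i, e i = (1 / 2 : ℝ) * (N i 0 : ℝ) * ((N i 0 : ℝ) - 1) * a 0 * b 0 +
      (1 / 2 : ℝ) * (N i 1 : ℝ) * ((N i 1 : ℝ) - 1) * a 1 * b 1 +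
      (N i 0 : ℝ) * (N i 1 : ℝ) * b 0 * a 1)
    (c : Fin 2 → ℝ)
    (hc : (N.map (Int.cast : ℤ → ℝ) + 1).mulVec c + e -
      (θ / (r : ℝ)) • ![(p : ℝ), (q : ℝ)] = 0) :
    (N.map (Int.cast : ℤ → ℝ) + 1).mulVec
        ![c 0 - a 0 * b 0 / 2, c 1 - a 1 * b 1 / 2] =
      (θ / (r : ℝ)) •
        ![(p : ℝ) + (r : ℝ) / 2 * (N 0 0 : ℝ) * (N 0 1 : ℝ),
          (q : ℝ) + (r : ℝ) / 2 * (N 1 0 : ℝ) * (N 1 1 : ℝ)] := by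
  set M := N.map (Int.cast : ℤ → ℝ)
  have hab : M *ᵥ a * M *ᵥ b = -(a * b) := by
    have hα0 : α ≠ 0 := (zero_lt_one.trans hα).ne'
    rw [mulVec_mul_mulVec_of_eigen ha hb, mul_neg, mul_one_div_cancel hα0, neg_smul, one_smul]
  have he' : e = -(1 / 2 : ℝ) • ((M + 1) *ᵥ (a * b)) -
      (θ / 2) • ![(N 0 0 : ℝ) * N 0 1, (N 1 0 : ℝ) * N 1 1] := by
    rw [add_mulVec, one_mulVec, hθ]
    exact (funext he).trans (half_quadratic_eq_of_mulVec_mul_mulVec_eq_neg M hab)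
  have hc' : (M + 1) *ᵥ c = (θ / r) • ![(p : ℝ), q] - e := eq_sub_of_add_eq (sub_eq_zero.mp hc)
  have hshift : ![c 0 - a 0 * b 0 / 2, c 1 - a 1 * b 1 / 2] = c - (1 / 2 : ℝ) • (a * b) := by
    ext i; fin_cases i <;> simp [div_eq_inv_mul]
  have hsplit : (θ / (r : ℝ)) • ![(p : ℝ) + (r : ℝ) / 2 * (N 0 0 : ℝ) * (N 0 1 : ℝ),
      (q : ℝ) + (r : ℝ) / 2 * (N 1 0 : ℝ) * (N 1 1 : ℝ)] =
      (θ / r) • ![(p : ℝ), q] + (θ / 2) • ![(N 0 0 : ℝ) * N 0 1, (N 1 0 : ℝ) * N 1 1] := by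
    have hr' : (r : ℝ) ≠ 0 := Int.cast_ne_zero.mpr hr
    simp only [smul_vec2, vec2_add, smul_eq_mul]
    refine vec2_eq ?_ ?_ <;> field_simp
  rw [hshift, hsplit, mulVec_sub, mulVec_smul, hc', he']
  module

/-- Equation (8.4) of Fujimoto–Nakayama, for Inoue surfaces of type `S⁻`:
if `(N + I)c + e − (θ/r)(p,q)ᵀ = 0` then
`(N + I)𝐜 = (θ/r)𝐩` where `𝐜 = (c₁ − a₁b₁/2, c₂ − a₂b₂/2)ᵀ` and
`𝐩 = (p + (r/2)n₁₁n₁₂, q + (r/2)n₂₁n₂₂)ᵀ`. -/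
theorem stmt_14 (N : Matrix (Fin 2) (Fin 2) ℤ) (hN : N.det = -1)
    (α : ℝ) (hα : 1 < α) (a b : Fin 2 → ℝ)
    (ha : (N.map (Int.cast : ℤ → ℝ)).mulVec a = α • a)
    (hb : (N.map (Int.cast : ℤ → ℝ)).mulVec b = (-(1 / α)) • b)
    (p q r : ℤ) (hr : r ≠ 0) (θ : ℝ) (hθ : θ = a 0 * b 1 - a 1 * b 0)
    (e : Fin 2 → ℝ)
    (he : ∀ i, e i = (1 / 2 : ℝ) * (N i 0 : ℝ) * ((N i 0 : ℝ) - 1) * a 0 * b 0 +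
      (1 / 2 : ℝ) * (N i 1 : ℝ) * ((N i 1 : ℝ) - 1) * a 1 * b 1 +
      (N i 0 : ℝ) * (N i 1 : ℝ) * b 0 * a 1)
    (c : Fin 2 → ℝ)
    (hc : (N.map (Int.cast : ℤ → ℝ) + 1).mulVec c + e -
      (θ / (r : ℝ)) • ![(p : ℝ), (q : ℝ)] = 0) :
    (N.map (Int.cast : ℤ → ℝ) + 1).mulVec
        ![c 0 - a 0 * b 0 / 2, c 1 - a 1 * b 1 / 2] =
      (θ / (r : ℝ)) •
        ![(p : ℝ) + (r : ℝ) / 2 * (N 0 0 : ℝ) * (N 0 1 : ℝ),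
          (q : ℝ) + (r : ℝ) / 2 * (N 1 0 : ℝ) * (N 1 1 : ℝ)] :=
  stmt_14_general N α hα a b ha hb p q r hr θ hθ e he c hc
end

section
/- Let N = (n_ij) ∈ SL(2,ℤ) have real eigenvalues α > 1 and 1/α, with eigenvectors a = (a₁,a₂)ᵀ, b = (b₁,b₂)ᵀ ∈ ℝ² satisfying N a = α a and N b = (1/α) b, let p, q, r be integers with r ≠ 0, let t ∈ ℂ, set θ = a₁b₂ − a₂b₁, set eᵢ = (1/2) n_{i1}(n_{i1}−1) a₁ b₁ + (1/2) n_{i2}(n_{i2}−1) a₂ b₂ + n_{i1} n_{i2} b₁ a₂, and let c₁, c₂ ∈ ℝ satisfy (N − I)(c₁,c₂)ᵀ + (e₁,e₂)ᵀ − (θ/r)(p,q)ᵀ = 0. Define the maps of ℂ² given by g₀(w,z) = (α w, z + t), gᵢ(w,z) = (w + aᵢ, z + bᵢ w + cᵢ) for i = 1,2, and g₃(w,z) = (w, z − θ/r). Then as maps of ℂ² one has g₀∘g₁∘g₀⁻¹ = g₁^{n₁₁}∘g₂^{n₁₂}∘g₃^{p}, g₀∘g₂∘g₀⁻¹ = g₁^{n₂₁}∘g₂^{n₂₂}∘g₃^{q},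 g₁∘g₂∘g₁⁻¹∘g₂⁻¹ = g₃^{r}, and g₃ commutes with g₀, g₁ and g₂. -/
/-!
Apart from `g₀`, the generators are shears `(w, z) ↦ (w + A, z + B w + C)`. Shears form a group
in which products, inverses and integer powers are computed on the coefficients (the `n`-th
power picks up the constant `n (n - 1) / 2 · A B`), and conjugation by `g₀` turns `(A, B, C)`
into `(α A, B / α, C)`. Each relation thus becomes an identity between coefficients: the
translation parts are the rows of `N a = α a`, the slopes the rows of `N b = b / α`, and the
constants the rows of the equation defining `c`. Two shears commute up to the vertical
translation by `B A' - B' A`, which for `g₁, g₂` is `-θ = r · (-θ / r)`.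
-/

def IsShear {K : Type*} [Field K] (G : Equiv.Perm (K × K)) (A B C : K) : Prop :=
  ∀ w z : K, G (w, z) = (w + A, z + B * w + C)

namespace IsShear

variable {K : Type*} [Field K] {G H : Equiv.Perm (K × K)} {A B C A' B' C' D : K}

theorem eq (hG : IsShear G A B C) (hH : IsShear H A' B' C')
    (hA : A = A') (hB : B = B') (hC : C = C') : G = H := by
  subst hA hB hC
  exact Equiv.ext fun ⟨w, z⟩ => (hG w z).trans (hH w z).symm

theorem one : IsShear (1 : Equiv.Perm (K × K)) 0 0 0 := fun w z => by simp

theorem mul (hG : IsShear G A B C) (hH : IsShear H A' B' C') :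
    IsShear (G * H) (A + A') (B + B') (C + C' + B * A') := fun w z => by
  rw [Equiv.Perm.mul_apply, hH, hG, Prod.mk.injEq]
  constructor <;> ring

theorem inv (hG : IsShear G A B C) : IsShear G⁻¹ (-A) (-B) (A * B - C) := fun w z => by
  rw [Equiv.Perm.inv_def, Equiv.symm_apply_eq, hG, Prod.mk.injEq]
  constructor <;> ring

theorem zpow [CharZero K] (hG : IsShear G A B C) (n : ℤ) :
    IsShear (G ^ n) (n * A) (n * B) (n * (n - 1) / 2 * A * B + n * C) := by
  induction n using Int.induction_on with
  | zero => simpa using one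
  | succ k ih =>
    rw [zpow_add_one]
    convert ih.mul hG using 1 <;> push_cast <;> ring
  | pred k ih =>
    rw [zpow_sub_one]
    convert ih.mul hG.inv using 1 <;> push_cast <;> ring

theorem commutator (hG : IsShear G A B C) (hH : IsShear H A' B' C') :
    IsShear (G * H * G⁻¹ * H⁻¹) 0 0 (B * A' - B' * A) := by
  convert ((hG.mul hH).mul hG.inv).mul hH.inv using 1 <;> ring

theorem commute (hG : IsShear G 0 0 D) (hH : IsShear H A B C) : Commute G H :=
  (hG.mul hH).eq (hH.mul hG) (by ring) (by ring) (by ring)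

theorem commute_of_apply_eq {f g : K → K} (hG : IsShear G 0 0 D)
    (hH : ∀ w z, H (w, z) = (f w, z + g w)) : Commute G H :=
  Equiv.ext fun ⟨w, z⟩ => by
    rw [Equiv.Perm.mul_apply, Equiv.Perm.mul_apply, hG, hH, hG, hH]
    simp only [zero_mul, add_zero, Prod.mk.injEq, true_and]
    ring

theorem conj_of_apply_eq {α t : K} (hα : α ≠ 0) (hH : ∀ w z, H (w, z) = (α * w, z + t))
    (hG : IsShear G A B C) : IsShear (H * G * H⁻¹) (α * A) (B / α) C := fun w z => by
  have hHinv : H⁻¹ (w, z) = (w / α, z - t) := by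
    rw [Equiv.Perm.inv_def, Equiv.symm_apply_eq, hH, Prod.mk.injEq]
    constructor
    · field_simp
    · ring
  rw [Equiv.Perm.mul_apply, Equiv.Perm.mul_apply, hHinv, hG, hH, Prod.mk.injEq]
  constructor
  · field_simp
  · ring

end IsShear

theorem mulVec_map_intCast_fin_two {R : Type*} [Ring R] (N : Matrix (Fin 2) (Fin 2) ℤ)
    (v : Fin 2 → R) (i : Fin 2) :
    (N.map (Int.cast : ℤ → R)).mulVec v i = N i 0 * v 0 + N i 1 * v 1 := by
  simp [Matrix.mulVec, dotProduct, Fin.sum_univ_two]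

theorem ofReal_row_of_mulVec_eq_smul {N : Matrix (Fin 2) (Fin 2) ℤ} {v : Fin 2 → ℝ} {μ : ℝ}
    (h : (N.map (Int.cast : ℤ → ℝ)).mulVec v = μ • v) (i : Fin 2) :
    (N i 0 : ℂ) * v 0 + (N i 1 : ℂ) * v 1 = μ * v i := by
  have hi := congrFun h i
  rw [mulVec_map_intCast_fin_two, Pi.smul_apply, smul_eq_mul] at hi
  exact_mod_cast hi

theorem ofReal_row_of_sub_one_mulVec_add_sub_smul {N : Matrix (Fin 2) (Fin 2) ℤ}
    {c e : Fin 2 → ℝ} {δ : ℝ} {p q : ℤ}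
    (h : (N.map (Int.cast : ℤ → ℝ) - 1).mulVec c + e - δ • ![(p : ℝ), (q : ℝ)] = 0) (i : Fin 2) :
    (N i 0 : ℂ) * c 0 + (N i 1 : ℂ) * c 1 - c i + e i = δ * (![p, q] i : ℤ) := by
  have hi := congrFun h i
  have hpq : ![(p : ℝ), (q : ℝ)] i = (![p, q] i : ℤ) := by fin_cases i <;> rfl
  rw [Matrix.sub_mulVec, Matrix.one_mulVec, Pi.sub_apply, Pi.add_apply, Pi.sub_apply,
    mulVec_map_intCast_fin_two, Pi.smul_apply, smul_eq_mul, hpq, Pi.zero_apply,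
    sub_eq_zero] at hi
  exact_mod_cast hi

theorem stmt_15_general (N : Matrix (Fin 2) (Fin 2) ℤ)
    (α : ℝ) (hα : 1 < α) (a b : Fin 2 → ℝ)
    (ha : (N.map (Int.cast : ℤ → ℝ)).mulVec a = α • a)
    (hb : (N.map (Int.cast : ℤ → ℝ)).mulVec b = (1 / α) • b)
    (p q r : ℤ) (hr : r ≠ 0) (t : ℂ) (θ : ℝ) (hθ : θ = a 0 * b 1 - a 1 * b 0)
    (e : Fin 2 → ℝ)
    (he : ∀ i, e i = (1 / 2 : ℝ) * (N i 0 : ℝ) * ((N i 0 : ℝ) - 1) * a 0 * b 0 +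
      (1 / 2 : ℝ) * (N i 1 : ℝ) * ((N i 1 : ℝ) - 1) * a 1 * b 1 +
      (N i 0 : ℝ) * (N i 1 : ℝ) * b 0 * a 1)
    (c : Fin 2 → ℝ)
    (hc : (N.map (Int.cast : ℤ → ℝ) - 1).mulVec c + e -
      (θ / (r : ℝ)) • ![(p : ℝ), (q : ℝ)] = 0)
    (G0 G1 G2 G3 : Equiv.Perm (ℂ × ℂ))
    (hG0 : ∀ w z : ℂ, G0 (w, z) = ((α : ℂ) * w, z + t))
    (hG1 : ∀ w z : ℂ, G1 (w, z) = (w + (a 0 : ℂ), z + (b 0 : ℂ) * w + (c 0 : ℂ)))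
    (hG2 : ∀ w z : ℂ, G2 (w, z) = (w + (a 1 : ℂ), z + (b 1 : ℂ) * w + (c 1 : ℂ)))
    (hG3 : ∀ w z : ℂ, G3 (w, z) = (w, z - ((θ / (r : ℝ) : ℝ) : ℂ))) :
    G0 * G1 * G0⁻¹ = G1 ^ (N 0 0) * G2 ^ (N 0 1) * G3 ^ p ∧
    G0 * G2 * G0⁻¹ = G1 ^ (N 1 0) * G2 ^ (N 1 1) * G3 ^ q ∧
    G1 * G2 * G1⁻¹ * G2⁻¹ = G3 ^ r ∧
    Commute G3 G0 ∧ Commute G3 G1 ∧ Commute G3 G2 := by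
  have hα0 : (α : ℂ) ≠ 0 := Complex.ofReal_ne_zero.mpr (zero_lt_one.trans hα).ne'
  have hS (i : Fin 2) : IsShear (![G1, G2] i) (a i) (b i) (c i) := by
    fin_cases i
    exacts [hG1, hG2]
  have hS3 : IsShear G3 0 0 (-(θ / r : ℝ)) := fun w z => by
    rw [hG3, sub_eq_add_neg, zero_mul, add_zero, add_zero]
  have hconj (i : Fin 2) :
      G0 * ![G1, G2] i * G0⁻¹ = G1 ^ (N i 0) * G2 ^ (N i 1) * G3 ^ (![p, q] i) := by
    have he' : (e i : ℂ) = 1 / 2 * N i 0 * (N i 0 - 1) * a 0 * b 0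
        + 1 / 2 * N i 1 * (N i 1 - 1) * a 1 * b 1 + N i 0 * N i 1 * b 0 * a 1 := by
      rw [he i]
      push_cast
      ring
    refine ((hS i).conj_of_apply_eq hα0 hG0).eq
      ((((hS 0).zpow _).mul ((hS 1).zpow _)).mul (hS3.zpow _)) ?_ ?_ ?_
    · linear_combination -ofReal_row_of_mulVec_eq_smul ha i
    · linear_combination (norm := (push_cast; ring)) -ofReal_row_of_mulVec_eq_smul hb i
    · linear_combination -ofReal_row_of_sub_one_mulVec_add_sub_smul hc i + he'
  refine ⟨hconj 0, hconj 1, ((hS 0).commutator (hS 1)).eq (hS3.zpow r) (by ring) (by ring) ?_,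
    hS3.commute_of_apply_eq hG0, hS3.commute (hS 0), hS3.commute (hS 1)⟩
  have hr' : (r : ℂ) ≠ 0 := Int.cast_ne_zero.mpr hr
  rw [hθ]
  push_cast
  field_simp
  ring

/-- The generating transformations of an Inoue surface of type `S⁺`, as bijections of
`ℂ²`, satisfy the relations `g₀g₁g₀⁻¹ = g₁^{n₁₁}g₂^{n₁₂}g₃^{p}`,
`g₀g₂g₀⁻¹ = g₁^{n₂₁}g₂^{n₂₂}g₃^{q}`, `g₁g₂g₁⁻¹g₂⁻¹ = g₃^{r}`, and `g₃` commutes with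
`g₀, g₁, g₂`. -/
theorem stmt_15 (N : Matrix (Fin 2) (Fin 2) ℤ) (hN : N.det = 1)
    (α : ℝ) (hα : 1 < α) (a b : Fin 2 → ℝ)
    (ha : (N.map (Int.cast : ℤ → ℝ)).mulVec a = α • a)
    (hb : (N.map (Int.cast : ℤ → ℝ)).mulVec b = (1 / α) • b)
    (p q r : ℤ) (hr : r ≠ 0) (t : ℂ) (θ : ℝ) (hθ : θ = a 0 * b 1 - a 1 * b 0)
    (e : Fin 2 → ℝ)
    (he : ∀ i, e i = (1 / 2 : ℝ) * (N i 0 : ℝ) * ((N i 0 : ℝ) - 1) * a 0 * b 0 +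
      (1 / 2 : ℝ) * (N i 1 : ℝ) * ((N i 1 : ℝ) - 1) * a 1 * b 1 +
      (N i 0 : ℝ) * (N i 1 : ℝ) * b 0 * a 1)
    (c : Fin 2 → ℝ)
    (hc : (N.map (Int.cast : ℤ → ℝ) - 1).mulVec c + e -
      (θ / (r : ℝ)) • ![(p : ℝ), (q : ℝ)] = 0)
    (G0 G1 G2 G3 : Equiv.Perm (ℂ × ℂ))
    (hG0 : ∀ w z : ℂ, G0 (w, z) = ((α : ℂ) * w, z + t))
    (hG1 : ∀ w z : ℂ, G1 (w, z) = (w + (a 0 : ℂ), z + (b 0 : ℂ) * w + (c 0 : ℂ)))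
    (hG2 : ∀ w z : ℂ, G2 (w, z) = (w + (a 1 : ℂ), z + (b 1 : ℂ) * w + (c 1 : ℂ)))
    (hG3 : ∀ w z : ℂ, G3 (w, z) = (w, z - ((θ / (r : ℝ) : ℝ) : ℂ))) :
    G0 * G1 * G0⁻¹ = G1 ^ (N 0 0) * G2 ^ (N 0 1) * G3 ^ p ∧
    G0 * G2 * G0⁻¹ = G1 ^ (N 1 0) * G2 ^ (N 1 1) * G3 ^ q ∧
    G1 * G2 * G1⁻¹ * G2⁻¹ = G3 ^ r ∧
    Commute G3 G0 ∧ Commute G3 G1 ∧ Commute G3 G2 :=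
  stmt_15_general N α hα a b ha hb p q r hr t θ hθ e he c hc G0 G1 G2 G3 hG0 hG1 hG2 hG3
end
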